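/- Scaling monotonicity of the truncated standard normal mean. Let 0 ≤ c < d ≤ +∞ and ρ ∈ (0, 1]. Then m(ρ c, ρ d) ≤ m(c, d), where ρ · (+∞) = +∞; that is, for a standard normal random variable Z, E(Z | ρc < Z < ρd) ≤ E(Z | c < Z < d). -/
import Mathlib


open MeasureTheory

noncomputable section

/-- The standard normal density `φ(z) = (2π)^{−1/2} exp(−z²/2)`. -/
def phi (z : ℝ) : ℝ := (Real.sqrt (2 * Real.pi))⁻¹ * Real.exp (-z ^ 2 / 2)

/-- The standard normal cumulative distribution function, extended to `EReal` with the
conventions `Φ(−∞) = 0` and `Φ(+∞) = 1`. -/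
def PhiE (c : EReal) : ℝ := ∫ z in {z : ℝ | (z : EReal) ≤ c}, phi z

/-- The truncated standard normal mean
`m(c, d) = (∫_c^d z φ(z) dz)/(Φ(d) − Φ(c))` for extended reals `c < d`. -/
def mE (c d : EReal) : ℝ :=
  (∫ z in {z : ℝ | c < (z : EReal) ∧ (z : EReal) < d}, z * phi z) / (PhiE d - PhiE c)

open Set
lemma phi_pos (z : ℝ) : 0 < phi z := by
  have : 0 < Real.sqrt (2 * Real.pi) := Real.sqrt_pos.2 (by positivity)
  exact mul_pos (inv_pos.2 this) (Real.exp_pos _)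

lemma integrable_phi : Integrable phi := by
  have h := (integrable_exp_neg_mul_sq (by norm_num : (0:ℝ) < 1/2)).const_mul
    (Real.sqrt (2 * Real.pi))⁻¹
  refine h.congr ?_
  filter_upwards with z
  rw [phi, show -z^2/2 = -(1/2)*z^2 from by ring]

lemma integrable_mul_phi : Integrable (fun z : ℝ => z * phi z) := by
  have h := (integrable_mul_exp_neg_mul_sq (by norm_num : (0:ℝ) < 1/2)).const_mul
    (Real.sqrt (2 * Real.pi))⁻¹
  refine h.congr ?_
  filter_upwards with z
  rw [phi, show -z^2/2 = -(1/2)*z^2 from by ring]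
  ring

lemma integral_phi_pos {s : Set ℝ} (hm : MeasurableSet s) (hs : 0 < volume s) :
    0 < ∫ z in s, phi z := by
  rw [setIntegral_pos_iff_support_of_nonneg_ae]
  · have : Function.support phi = Set.univ := by
      ext z; simp [Function.support, (phi_pos z).ne']
    rwa [this, Set.univ_inter]
  · filter_upwards with z using (phi_pos z).le
  · exact integrable_phi.integrableOn

/-- Core comparison: if `I ⊆ {z ≤ t}` and `J ⊆ {t ≤ z}` then
`(∫_I zφ)(∫_J φ) ≤ (∫_J zφ)(∫_I φ)`. -/
lemma core {I J : Set ℝ} (t : ℝ) (hI : MeasurableSet I) (hJ : MeasurableSet J)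
    (hIt : ∀ z ∈ I, z ≤ t) (hJt : ∀ z ∈ J, t ≤ z) :
    (∫ z in I, z * phi z) * (∫ z in J, phi z) ≤ (∫ z in J, z * phi z) * (∫ z in I, phi z) := by
  have hDI : 0 ≤ ∫ z in I, phi z := setIntegral_nonneg hI fun z _ => (phi_pos z).le
  have hDJ : 0 ≤ ∫ z in J, phi z := setIntegral_nonneg hJ fun z _ => (phi_pos z).le
  have h1 : (∫ z in I, z * phi z) ≤ t * ∫ z in I, phi z := by
    rw [← integral_const_mul]
    exact setIntegral_mono_on integrable_mul_phi.integrableOn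
      (integrable_phi.integrableOn.const_mul t) hI
      (fun z hz => mul_le_mul_of_nonneg_right (hIt z hz) (phi_pos z).le)
  have h2 : t * (∫ z in J, phi z) ≤ ∫ z in J, z * phi z := by
    rw [← integral_const_mul]
    exact setIntegral_mono_on (integrable_phi.integrableOn.const_mul t)
      integrable_mul_phi.integrableOn hJ
      (fun z hz => mul_le_mul_of_nonneg_right (hJt z hz) (phi_pos z).le)
  nlinarith

/-- Drop the low part: mean over `I ∪ J` is at most mean over `J`. -/
lemma ratio_drop_low {I J : Set ℝ} (t : ℝ) (hI : MeasurableSet I) (hJ : MeasurableSet J)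
    (hd : Disjoint I J) (hIt : ∀ z ∈ I, z ≤ t) (hJt : ∀ z ∈ J, t ≤ z)
    (hJpos : 0 < ∫ z in J, phi z) :
    (∫ z in I ∪ J, z * phi z) / (∫ z in I ∪ J, phi z)
      ≤ (∫ z in J, z * phi z) / (∫ z in J, phi z) := by
  rw [setIntegral_union hd hJ integrable_mul_phi.integrableOn integrable_mul_phi.integrableOn,
    setIntegral_union hd hJ integrable_phi.integrableOn integrable_phi.integrableOn]
  have hDI : 0 ≤ ∫ z in I, phi z := setIntegral_nonneg hI fun z _ => (phi_pos z).le
  rw [div_le_div_iff₀ (by linarith) hJpos]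
  have := core t hI hJ hIt hJt
  nlinarith

/-- Add a high part: mean over `I` is at most mean over `I ∪ J`. -/
lemma ratio_add_high {I J : Set ℝ} (t : ℝ) (hI : MeasurableSet I) (hJ : MeasurableSet J)
    (hd : Disjoint I J) (hIt : ∀ z ∈ I, z ≤ t) (hJt : ∀ z ∈ J, t ≤ z)
    (hIpos : 0 < ∫ z in I, phi z) :
    (∫ z in I, z * phi z) / (∫ z in I, phi z)
      ≤ (∫ z in I ∪ J, z * phi z) / (∫ z in I ∪ J, phi z) := by
  rw [setIntegral_union hd hJ integrable_mul_phi.integrableOn integrable_mul_phi.integrableOn,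
    setIntegral_union hd hJ integrable_phi.integrableOn integrable_phi.integrableOn]
  have hDJ : 0 ≤ ∫ z in J, phi z := setIntegral_nonneg hJ fun z _ => (phi_pos z).le
  rw [div_le_div_iff₀ hIpos (by linarith)]
  have := core t hI hJ hIt hJt
  nlinarith

lemma mE_coe (a b : ℝ) (h : a ≤ b) :
    mE (a : EReal) (b : EReal) = (∫ z in Ioo a b, z * phi z) / (∫ z in Ioo a b, phi z) := by
  have hset : {z : ℝ | (a : EReal) < (z : EReal) ∧ (z : EReal) < (b : EReal)} = Ioo a b := by
    ext z; simp [EReal.coe_lt_coe_iff]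
  have hIic : ∀ x : ℝ, {z : ℝ | (z : EReal) ≤ (x : EReal)} = Iic x := by
    intro x; ext z; simp [EReal.coe_le_coe_iff]
  have hsplit : PhiE (b : EReal) - PhiE (a : EReal) = ∫ z in Ioo a b, phi z := by
    unfold PhiE
    rw [hIic, hIic, ← Iic_union_Ioc_eq_Iic h,
      setIntegral_union (Iic_disjoint_Ioc le_rfl) measurableSet_Ioc
        integrable_phi.integrableOn integrable_phi.integrableOn,
      integral_Ioc_eq_integral_Ioo]
    ring
  rw [mE, hset, hsplit]

lemma mE_top (a : ℝ) :
    mE (a : EReal) ⊤ = (∫ z in Ioi a, z * phi z) / (∫ z in Ioi a, phi z) := by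
  have hset : {z : ℝ | (a : EReal) < (z : EReal) ∧ (z : EReal) < ⊤} = Ioi a := by
    ext z; simp [EReal.coe_lt_coe_iff, EReal.coe_lt_top]
  have hIic : {z : ℝ | (z : EReal) ≤ (a : EReal)} = Iic a := by
    ext z; simp [EReal.coe_le_coe_iff]
  have htop : {z : ℝ | (z : EReal) ≤ ⊤} = Set.univ := by
    ext z; simp [le_top]
  have hsplit : PhiE ⊤ - PhiE (a : EReal) = ∫ z in Ioi a, phi z := by
    unfold PhiE
    rw [htop, hIic, ← Iic_union_Ioi (a := a),
      setIntegral_union (Iic_disjoint_Ioi le_rfl) measurableSet_Ioi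
        integrable_phi.integrableOn integrable_phi.integrableOn]
    ring
  rw [mE, hset, hsplit]

/-- **Scaling monotonicity of the truncated standard normal mean.**
For `0 ≤ c < d ≤ +∞` and `ρ ∈ (0, 1]`, `m(ρc, ρd) ≤ m(c, d)`; that is, for a standard
normal `Z`, `E(Z | ρc < Z < ρd) ≤ E(Z | c < Z < d)` (with `ρ · (+∞) = +∞`). -/
theorem truncated_mean_scaling (c : ℝ) (d : EReal) (ρ : ℝ)
    (hc : 0 ≤ c) (hcd : (c : EReal) < d) (hρ0 : 0 < ρ) (hρ1 : ρ ≤ 1) :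
    mE ((ρ : EReal) * (c : EReal)) ((ρ : EReal) * d) ≤ mE (c : EReal) d := by
  have hρc : ρ * c ≤ c := by nlinarith
  induction d using EReal.rec with
  | bot => exact absurd hcd (by simp)
  | coe d =>
    have hcd' : c < d := EReal.coe_lt_coe_iff.mp hcd
    have hρcd : ρ * c < ρ * d := by nlinarith
    have hρd : ρ * d ≤ d := by nlinarith
    rw [← EReal.coe_mul, ← EReal.coe_mul, mE_coe _ _ hρcd.le, mE_coe _ _ hcd'.le]
    have step1 : (∫ z in Ioo (ρ*c) (ρ*d), z * phi z) / (∫ z in Ioo (ρ*c) (ρ*d), phi z)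
        ≤ (∫ z in Ioo (ρ*c) d, z * phi z) / (∫ z in Ioo (ρ*c) d, phi z) := by
      rw [← Ioo_union_Ico_eq_Ioo hρcd hρd]
      exact ratio_add_high (ρ*d) measurableSet_Ioo measurableSet_Ico
        (Set.disjoint_left.mpr fun z hz hz' => absurd hz'.1 (not_le.2 hz.2)) (fun z hz => hz.2.le) (fun z hz => hz.1)
        (integral_phi_pos measurableSet_Ioo (by simp [hρcd]))
    have step2 : (∫ z in Ioo (ρ*c) d, z * phi z) / (∫ z in Ioo (ρ*c) d, phi z)
        ≤ (∫ z in Ioo c d, z * phi z) / (∫ z in Ioo c d, phi z) := by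
      rw [← Ioc_union_Ioo_eq_Ioo hρc hcd']
      exact ratio_drop_low c measurableSet_Ioc measurableSet_Ioo
        (Set.disjoint_left.mpr fun z hz hz' => absurd hz'.1 (not_lt.2 hz.2)) (fun z hz => hz.2) (fun z hz => hz.1.le)
        (integral_phi_pos measurableSet_Ioo (by simp [hcd']))
    linarith
  | top =>
    rw [EReal.mul_top_of_pos (by exact_mod_cast hρ0), ← EReal.coe_mul, mE_top, mE_top]
    rw [← Ioc_union_Ioi_eq_Ioi hρc]
    exact ratio_drop_low c measurableSet_Ioc measurableSet_Ioi
      Ioc_disjoint_Ioi_same (fun z hz => hz.2) (fun z hz => le_of_lt hz)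
      (integral_phi_pos measurableSet_Ioi (by simp))
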